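/- Let N ≥ 3, and for R > 0 set A = (R(R+1))^{N−2}/((R+1)^{N−2} − R^{N−2}), B = (R+1)^{N−2}/((R+1)^{N−2} − R^{N−2}), and q_R(t) = (N−2)^{−2} · A^{2/(N−2)} · (B − t)^{−2(N−1)/(N−2)} for t ∈ [0,1]. Then q_R(t) → 1 as R → +∞, uniformly in t ∈ [0,1]. -/

import Mathlib

/-!
With `n = N - 2` and `D = (R + 1)^n - R^n`, the weight `q_R(t)` is a nonnegative multiple of
`(B - t)^p` with `p < 0`, hence increasing in `t`, so on `[0, 1]` it is squeezed between
`q_R(0) = (R D / (n (R + 1)^n))^2` and `q_R(1) = ((R + 1) D / (n R^n))^2`. Both tend to `1`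
because `R D / R^n = R ((1 + 1/R)^n - 1)` is a difference quotient of `x ↦ x^n` at `1`,
which tends to its derivative `n`.
-/

open Real Filter Topology Set

theorem tendsto_mul_one_add_inv_pow_sub_one (n : ℕ) :
    Tendsto (fun R : ℝ => R * ((1 + R⁻¹) ^ n - 1)) atTop (𝓝 n) := by
  have h := ((hasDerivAt_pow n (1 : ℝ)).tendsto_slope_zero_right).comp
    tendsto_inv_atTop_nhdsGT_zero
  simpa [Function.comp_def] using h

theorem tendstoUniformlyOn_of_squeeze {ι α : Type*} {l : Filter ι} {s : Set α}
    {F : ι → α → ℝ} {lo hi : ι → ℝ} {c : ℝ} (hlo : Tendsto lo l (𝓝 c))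
    (hhi : Tendsto hi l (𝓝 c)) (h : ∀ᶠ i in l, ∀ x ∈ s, lo i ≤ F i x ∧ F i x ≤ hi i) :
    TendstoUniformlyOn F (fun _ => c) l s := by
  rw [Metric.tendstoUniformlyOn_iff]
  intro ε hε
  filter_upwards [h, Metric.tendsto_nhds.mp hlo ε hε, Metric.tendsto_nhds.mp hhi ε hε]
    with i hi hloi hhii x hx
  rw [Real.dist_eq] at hloi hhii ⊢
  obtain ⟨h₁, h₂⟩ := hi x hx
  rw [abs_lt] at hloi hhii ⊢
  constructor <;> linarith [hloi.1, hhii.2]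

theorem pow_rpow_div_natCast {x : ℝ} (hx : 0 ≤ x) {n : ℕ} (hn : n ≠ 0) (y : ℝ) :
    (x ^ n) ^ (y / n) = x ^ y := by
  rw [← rpow_natCast_mul hx, mul_div_cancel₀ _ (Nat.cast_ne_zero.mpr hn)]

theorem one_div_sq_mul_pow_div_rpow_mul_pow_div_rpow {n : ℕ} (hn : n ≠ 0) {a b D : ℝ}
    (ha : 0 < a) (hb : 0 ≤ b) (hD : 0 < D) :
    1 / (n : ℝ) ^ 2 * (b ^ n / D) ^ ((2 : ℝ) / n) * (a ^ n / D) ^ (-(2 * ((n : ℝ) + 1)) / n)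
      = (b * D / (n * a ^ (n + 1))) ^ 2 := by
  -- with `u = D ^ (1 / n)` both bases are `n`-th powers: `(b / u) ^ n` and `(a / u) ^ n`
  obtain ⟨u, hu, rfl⟩ : ∃ u > 0, u ^ n = D :=
    ⟨D ^ ((n : ℝ)⁻¹), rpow_pos_of_pos hD _, rpow_inv_natCast_pow hD.le hn⟩
  rw [← div_pow, ← div_pow, pow_rpow_div_natCast (by positivity) hn,
    pow_rpow_div_natCast (by positivity) hn, rpow_neg (by positivity)]
  rw [show 2 * ((n : ℝ) + 1) = ((2 * (n + 1) : ℕ) : ℝ) by push_cast; ring, rpow_natCast,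
    rpow_two, div_pow a]
  field_simp
  ring

-- `q_R(t)` of the statement, with `n = N - 2`
noncomputable def annulusWeight (n : ℕ) (R t : ℝ) : ℝ :=
  1 / (n : ℝ) ^ 2 * ((R * (R + 1)) ^ n / ((R + 1) ^ n - R ^ n)) ^ ((2 : ℝ) / n) *
    ((R + 1) ^ n / ((R + 1) ^ n - R ^ n) - t) ^ (-(2 * ((n : ℝ) + 1)) / n)

section annulusWeight

variable {n : ℕ} {R : ℝ}

theorem add_one_pow_sub_pow_pos (hn : n ≠ 0) (hR : 0 ≤ R) : 0 < (R + 1) ^ n - R ^ n :=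
  sub_pos.mpr (pow_lt_pow_left₀ (lt_add_one R) hR hn)

theorem one_add_inv_eq_div (hR : 0 < R) : 1 + R⁻¹ = (R + 1) / R := by
  field_simp

theorem annulusWeight_monotoneOn (hn : n ≠ 0) (hR : 0 < R) :
    MonotoneOn (annulusWeight n R) (Iic 1) := by
  intro t ht t' ht' htt'
  have hD := add_one_pow_sub_pow_pos hn hR.le
  have hB : 1 < (R + 1) ^ n / ((R + 1) ^ n - R ^ n) := by
    rw [one_lt_div hD]
    linarith [pow_pos hR n]
  have hp : -(2 * ((n : ℝ) + 1)) / n ≤ 0 := by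
    have := n.cast_nonneg (α := ℝ)
    apply div_nonpos_of_nonpos_of_nonneg <;> linarith
  unfold annulusWeight
  refine mul_le_mul_of_nonneg_left ?_
    (mul_nonneg (by positivity) (rpow_nonneg (by positivity) _))
  exact rpow_le_rpow_of_nonpos (by linarith [mem_Iic.mp ht']) (by linarith) hp

theorem annulusWeight_zero (hn : n ≠ 0) (hR : 0 < R) :
    annulusWeight n R 0 = (R * ((1 + R⁻¹) ^ n - 1) / (1 + R⁻¹) ^ n / n) ^ 2 := by
  rw [annulusWeight, sub_zero, one_div_sq_mul_pow_div_rpow_mul_pow_div_rpow hn (by positivity)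
    (by positivity) (add_one_pow_sub_pow_pos hn hR.le), one_add_inv_eq_div hR, div_pow (R + 1) R n]
  have := hR.ne'
  field_simp
  ring

theorem annulusWeight_one (hn : n ≠ 0) (hR : 0 < R) :
    annulusWeight n R 1 = ((1 + R⁻¹) * (R * ((1 + R⁻¹) ^ n - 1)) / n) ^ 2 := by
  have hD := add_one_pow_sub_pow_pos hn hR.le
  have hB : (R + 1) ^ n / ((R + 1) ^ n - R ^ n) - 1 = R ^ n / ((R + 1) ^ n - R ^ n) := by
    field_simp
    ring
  rw [annulusWeight, hB, one_div_sq_mul_pow_div_rpow_mul_pow_div_rpow hn hR (by positivity) hD,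
    one_add_inv_eq_div hR, div_pow (R + 1) R n]
  have := hR.ne'
  field_simp
  ring

theorem tendsto_one_add_inv_atTop : Tendsto (fun R : ℝ => 1 + R⁻¹) atTop (𝓝 1) := by
  simpa using tendsto_inv_atTop_zero.const_add (1 : ℝ)

theorem tendsto_annulusWeight_zero (hn : n ≠ 0) :
    Tendsto (fun R => annulusWeight n R 0) atTop (𝓝 1) := by
  have h := (((tendsto_mul_one_add_inv_pow_sub_one n).div (tendsto_one_add_inv_atTop.pow n)
    (by simp)).div_const (n : ℝ)).pow 2
  rw [one_pow, div_one, div_self (Nat.cast_ne_zero.mpr hn), one_pow] at h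
  refine h.congr' ?_
  filter_upwards [eventually_gt_atTop 0] with R hR using (annulusWeight_zero hn hR).symm

theorem tendsto_annulusWeight_one (hn : n ≠ 0) :
    Tendsto (fun R => annulusWeight n R 1) atTop (𝓝 1) := by
  have h := ((tendsto_one_add_inv_atTop.mul (tendsto_mul_one_add_inv_pow_sub_one n)).div_const
    (n : ℝ)).pow 2
  rw [one_mul, div_self (Nat.cast_ne_zero.mpr hn), one_pow] at h
  refine h.congr' ?_
  filter_upwards [eventually_gt_atTop 0] with R hR using (annulusWeight_one hn hR).symm

theorem tendstoUniformlyOn_annulusWeight (hn : n ≠ 0) :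
    TendstoUniformlyOn (annulusWeight n) (fun _ => 1) atTop (Icc 0 1) := by
  refine tendstoUniformlyOn_of_squeeze (tendsto_annulusWeight_zero hn)
    (tendsto_annulusWeight_one hn) ?_
  filter_upwards [eventually_gt_atTop 0] with R hR t ht
  have hmono := annulusWeight_monotoneOn hn hR
  exact ⟨hmono (by simp) ht.2 ht.1, hmono ht.2 (by simp) ht.2⟩

end annulusWeight

theorem stmt9 (N : ℕ) (hN : 3 ≤ N) :
    ∀ ε > (0 : ℝ), ∃ R₀ : ℝ, ∀ R ≥ R₀, ∀ t ∈ Set.Icc (0 : ℝ) 1,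
      |(1 / ((N : ℝ) - 2) ^ 2) *
          ((R * (R + 1)) ^ (N - 2) / ((R + 1) ^ (N - 2) - R ^ (N - 2)))
            ^ ((2 : ℝ) / ((N : ℝ) - 2)) *
          ((R + 1) ^ (N - 2) / ((R + 1) ^ (N - 2) - R ^ (N - 2)) - t)
            ^ (-(2 * ((N : ℝ) - 1)) / ((N : ℝ) - 2)) - 1| < ε := by
  obtain ⟨n, rfl⟩ : ∃ n, N = n + 2 := ⟨N - 2, by omega⟩
  simp only [Nat.add_sub_cancel, Nat.cast_add, Nat.cast_ofNat, add_sub_cancel_right,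
    show (n : ℝ) + 2 - 1 = n + 1 by ring]
  intro ε hε
  obtain ⟨R₀, hR₀⟩ := eventually_atTop.mp <| Metric.tendstoUniformlyOn_iff.mp
    (tendstoUniformlyOn_annulusWeight (n := n) (by omega)) ε hε
  refine ⟨R₀, fun R hR t ht => ?_⟩
  rw [← Real.dist_eq, dist_comm]
  exact hR₀ R hR t ht
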